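/- Let P and Q be rank-one projections on a two-dimensional complex Hilbert space H. Then ‖P − Q‖_v = √(1 − tr(PQ)). -/
import Mathlib


open scoped InnerProductSpace

/-- Variance of a bounded observable `T` at a vector `φ`. -/
noncomputable def observableVar {H : Type*} [NormedAddCommGroup H] [InnerProductSpace ℂ H]
    (T : H →L[ℂ] H) (φ : H) : ℝ :=
  (⟪T (T φ), φ⟫_ℂ).re - ((⟪T φ, φ⟫_ℂ).re) ^ 2

/-- Maximal deviation of a bounded observable `T`. -/
noncomputable def maxDev {H : Type*} [NormedAddCommGroup H] [InnerProductSpace ℂ H]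
    (T : H →L[ℂ] H) : ℝ :=
  ⨆ φ : {x : H // ‖x‖ = 1}, Real.sqrt (observableVar T φ)

abbrev EE := EuclideanSpace ℂ (Fin 2)

lemma cayley2 (M : Matrix (Fin 2) (Fin 2) ℂ) :
    M * M = M.trace • M - M.det • 1 := by
  ext i j
  fin_cases i <;> fin_cases j <;>
    simp [Matrix.mul_apply, Fin.sum_univ_two, Matrix.trace_fin_two, Matrix.det_fin_two,
      Matrix.one_apply] <;> ring

lemma trace_proj (P : EE →L[ℂ] EE) (hP2 : IsIdempotentElem P)
    (h : Module.finrank ℂ (LinearMap.range (P : EE →ₗ[ℂ] EE)) = 1) :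
    LinearMap.trace ℂ EE (P : EE →ₗ[ℂ] EE) = 1 := by
  have hproj : LinearMap.IsProj (LinearMap.range (P : EE →ₗ[ℂ] EE)) (P : EE →ₗ[ℂ] EE) := by
    refine ⟨fun x => LinearMap.mem_range_self _ x, ?_⟩
    rintro x ⟨y, rfl⟩
    have := congrArg (fun f => f y) hP2
    simpa using this
  rw [hproj.trace, h]
  norm_num

set_option maxHeartbeats 1000000 in
theorem aux_main
    (P Q : EE →L[ℂ] EE)
    (hP : IsSelfAdjoint P) (hP2 : IsIdempotentElem P)
    (hQ : IsSelfAdjoint Q) (hQ2 : IsIdempotentElem Q)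
    (hPrank : Module.finrank ℂ (LinearMap.range (P : EE →ₗ[ℂ] EE)) = 1)
    (hQrank : Module.finrank ℂ (LinearMap.range (Q : EE →ₗ[ℂ] EE)) = 1) :
    maxDev (P - Q) = Real.sqrt (1 -
      (LinearMap.trace ℂ EE ((P * Q : EE →L[ℂ] EE) : EE →ₗ[ℂ] EE)).re) := by
  classical
  set T : EE →L[ℂ] EE := P - Q with hT
  set Tl : EE →ₗ[ℂ] EE := (T : EE →ₗ[ℂ] EE) with hTl
  set trPQ : ℂ := LinearMap.trace ℂ EE ((P * Q : EE →L[ℂ] EE) : EE →ₗ[ℂ] EE) with htrPQ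
  have htrP := trace_proj P hP2 hPrank
  have htrQ := trace_proj Q hQ2 hQrank
  have htrT : LinearMap.trace ℂ EE Tl = 0 := by
    simp only [hTl, hT, ContinuousLinearMap.coe_sub, map_sub, htrP, htrQ, sub_self]
  let b := EuclideanSpace.basisFun (Fin 2) ℂ
  set M : Matrix (Fin 2) (Fin 2) ℂ := LinearMap.toMatrix b.toBasis b.toBasis Tl with hM
  have hMtr : M.trace = 0 := by
    rw [hM, ← LinearMap.trace_eq_matrix_trace ℂ b.toBasis Tl]; exact htrT
  set s : ℂ := - M.det with hs
  have hsq : Tl ∘ₗ Tl = s • LinearMap.id := by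
    have h1 : M * M = s • 1 := by rw [cayley2, hMtr]; simp [hs]
    have h2 := congrArg (Matrix.toLin b.toBasis b.toBasis) h1
    rw [Matrix.toLin_mul b.toBasis b.toBasis b.toBasis, hM, Matrix.toLin_toMatrix,
      map_smul, Matrix.toLin_one] at h2
    exact h2
  have hsq' : ∀ x : EE, T (T x) = s • x := by
    intro x
    have := congrArg (fun f => f x) hsq
    simpa [hTl] using this
  -- trace computation
  have htr2 : LinearMap.trace ℂ EE (Tl ∘ₗ Tl) = 2 - 2 * trPQ := by
    have hPQ : ((P * Q : EE →L[ℂ] EE) : EE →ₗ[ℂ] EE)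
        = (P : EE →ₗ[ℂ] EE) * (Q : EE →ₗ[ℂ] EE) := rfl
    have hPP : (P : EE →ₗ[ℂ] EE) * (P : EE →ₗ[ℂ] EE) = (P : EE →ₗ[ℂ] EE) :=
      congrArg ContinuousLinearMap.toLinearMap hP2
    have hQQ : (Q : EE →ₗ[ℂ] EE) * (Q : EE →ₗ[ℂ] EE) = (Q : EE →ₗ[ℂ] EE) :=
      congrArg ContinuousLinearMap.toLinearMap hQ2
    have hexp : Tl ∘ₗ Tl = (P : EE →ₗ[ℂ] EE) + (Q : EE →ₗ[ℂ] EE)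
        - (P : EE →ₗ[ℂ] EE) * (Q : EE →ₗ[ℂ] EE) - (Q : EE →ₗ[ℂ] EE) * (P : EE →ₗ[ℂ] EE) := by
      have : Tl ∘ₗ Tl = Tl * Tl := rfl
      rw [this, hTl, hT, ContinuousLinearMap.coe_sub, sub_mul, mul_sub, mul_sub, hPP, hQQ]
      abel
    rw [hexp]
    simp only [map_sub, map_add]
    rw [LinearMap.trace_mul_comm ℂ (Q : EE →ₗ[ℂ] EE) (P : EE →ₗ[ℂ] EE)]
    rw [htrP, htrQ, htrPQ, hPQ]
    ring
  have hs1 : s = 1 - trPQ := by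
    have h3 : LinearMap.trace ℂ EE (Tl ∘ₗ Tl) = s * 2 := by
      rw [hsq, map_smul, LinearMap.trace_id, smul_eq_mul]
      norm_num [finrank_euclideanSpace]
    rw [h3] at htr2
    linear_combination htr2 / 2
  -- self-adjointness
  have hTsa : IsSelfAdjoint T := by
    rw [hT]; exact IsSelfAdjoint.sub (R := EE →L[ℂ] EE) hP hQ
  have hadj : ContinuousLinearMap.adjoint T = T := by
    rw [← ContinuousLinearMap.star_eq_adjoint]; exact hTsa
  have hinner : ∀ x y : EE, ⟪T x, y⟫_ℂ = ⟪x, T y⟫_ℂ := by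
    intro x y
    conv_lhs => rw [← hadj]
    exact ContinuousLinearMap.adjoint_inner_left T y x
  -- s.re ≥ 0
  have hsre : 0 ≤ s.re := by
    set x0 : EE := EuclideanSpace.single (0 : Fin 2) (1:ℂ) with hx0
    have h1 : (⟪T (T x0), x0⟫_ℂ).re = s.re := by
      rw [hsq', inner_smul_left, inner_self_eq_norm_sq_to_K, hx0, EuclideanSpace.norm_single]
      norm_num
    rw [← h1, hinner]
    have := inner_self_nonneg (𝕜 := ℂ) (x := T x0)
    simpa using this
  -- variance formula
  have hVar : ∀ φ : EE, ‖φ‖ = 1 → observableVar T φ = s.re - ((⟪T φ, φ⟫_ℂ).re) ^ 2 := by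
    intro φ hφ
    unfold observableVar
    rw [hsq', inner_smul_left, inner_self_eq_norm_sq_to_K, hφ]
    norm_num
  -- path on the unit sphere
  set e0 : EE := EuclideanSpace.single (0 : Fin 2) (1:ℂ) with he0
  set e1 : EE := EuclideanSpace.single (1 : Fin 2) (1:ℂ) with he1
  set ψ : ℝ → EE := fun θ => ((Real.cos θ : ℂ)) • e0 + ((Real.sin θ : ℂ)) • e1 with hψ
  have hψinner : ∀ θ, ⟪ψ θ, ψ θ⟫_ℂ = 1 := by
    intro θ
    simp only [hψ, he0, he1, inner_add_left, inner_add_right, inner_smul_left, inner_smul_right,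
      EuclideanSpace.inner_single_left, EuclideanSpace.single_apply, Complex.conj_ofReal]
    norm_num
    linear_combination Complex.sin_sq_add_cos_sq (θ : ℂ)
  have hψnorm : ∀ θ, ‖ψ θ‖ = 1 := by
    intro θ
    have h2 := hψinner θ
    rw [inner_self_eq_norm_sq_to_K] at h2
    simp at h2
    rcases h2 with h2 | h2
    · exact h2
    · exfalso
      have h3 : ‖ψ θ‖ = -1 := by exact_mod_cast h2
      linarith [norm_nonneg (ψ θ)]
  set f : ℝ → ℝ := fun θ => (⟪T (ψ θ), ψ θ⟫_ℂ).re with hf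
  have hψc : Continuous ψ := by
    rw [hψ]
    exact ((Complex.continuous_ofReal.comp Real.continuous_cos).smul continuous_const).add
      ((Complex.continuous_ofReal.comp Real.continuous_sin).smul continuous_const)
  have hfc : Continuous f := Complex.continuous_re.comp ((T.continuous.comp hψc).inner hψc)
  have hψ0 : ψ 0 = e0 := by simp [hψ]
  have hψpi : ψ (Real.pi/2) = e1 := by simp [hψ]
  have hdiag : ∀ i : Fin 2, M i i = ⟪b i, T (b i)⟫_ℂ := by
    intro i
    rw [hM, LinearMap.toMatrix_apply, OrthonormalBasis.coe_toBasis,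
      OrthonormalBasis.coe_toBasis_repr_apply, OrthonormalBasis.repr_apply_apply]
    rfl
  have hb0 : b 0 = e0 := by rw [he0]; simp [b]
  have hb1 : b 1 = e1 := by rw [he1]; simp [b]
  have hsum : f 0 + f (Real.pi/2) = 0 := by
    have h1 : ⟪T e0, e0⟫_ℂ + ⟪T e1, e1⟫_ℂ = 0 := by
      rw [hinner e0 e0, hinner e1 e1, ← hb0, ← hb1, ← hdiag 0, ← hdiag 1]
      have := hMtr
      rwa [Matrix.trace_fin_two] at this
    have h2 : f 0 + f (Real.pi/2) = (⟪T e0, e0⟫_ℂ + ⟪T e1, e1⟫_ℂ).re := by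
      rw [hf]
      simp only [hψ0, hψpi, Complex.add_re]
    rw [h2, h1]
    simp
  obtain ⟨θ₀, hθ₀mem, hθ₀⟩ : ∃ θ ∈ Set.uIcc (0:ℝ) (Real.pi/2), f θ = 0 := by
    have hsub := intermediate_value_uIcc (a := (0:ℝ)) (b := Real.pi/2) hfc.continuousOn
    have h0 : (0:ℝ) ∈ Set.uIcc (f 0) (f (Real.pi/2)) := by
      rcases le_total (f 0) 0 with h | h
      · exact Set.mem_uIcc.2 (Or.inl ⟨h, by linarith⟩)
      · exact Set.mem_uIcc.2 (Or.inr ⟨by linarith, h⟩)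
    obtain ⟨θ, hθ, hfθ⟩ := hsub h0
    exact ⟨θ, hθ, hfθ⟩
  set φ₀ : EE := ψ θ₀ with hφ₀
  have hφ₀n : ‖φ₀‖ = 1 := hψnorm θ₀
  have hφ₀z : (⟪T φ₀, φ₀⟫_ℂ).re = 0 := hθ₀
  haveI : Nonempty {x : EE // ‖x‖ = 1} := ⟨⟨φ₀, hφ₀n⟩⟩
  have hbound : ∀ φ : {x : EE // ‖x‖ = 1}, Real.sqrt (observableVar T ↑φ) ≤ Real.sqrt s.re := by
    rintro ⟨φ, hφ⟩
    apply Real.sqrt_le_sqrt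
    rw [hVar φ hφ]
    nlinarith [sq_nonneg ((⟪T φ, φ⟫_ℂ).re)]
  have hval : Real.sqrt (observableVar T φ₀) = Real.sqrt s.re := by
    rw [hVar φ₀ hφ₀n, hφ₀z]
    norm_num
  have hmax : maxDev T = Real.sqrt s.re := by
    refine le_antisymm (ciSup_le hbound) ?_
    have hb2 : BddAbove (Set.range fun φ : {x : EE // ‖x‖ = 1} =>
        Real.sqrt (observableVar T ↑φ)) := by
      refine ⟨Real.sqrt s.re, ?_⟩
      rintro y ⟨φ, rfl⟩
      exact hbound φ
    have h5 := le_ciSup hb2 (⟨φ₀, hφ₀n⟩ : {x : EE // ‖x‖ = 1})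
    rw [hval] at h5
    exact h5
  rw [hmax]
  congr 1
  rw [hs1, Complex.sub_re, Complex.one_re]

theorem maxDev_sub_rank_one_projections
    (P Q : EuclideanSpace ℂ (Fin 2) →L[ℂ] EuclideanSpace ℂ (Fin 2))
    (hP : IsSelfAdjoint P) (hP2 : IsIdempotentElem P)
    (hQ : IsSelfAdjoint Q) (hQ2 : IsIdempotentElem Q)
    (hPrank : Module.finrank ℂ (LinearMap.range (P : EuclideanSpace ℂ (Fin 2) →ₗ[ℂ]
      EuclideanSpace ℂ (Fin 2))) = 1)
    (hQrank : Module.finrank ℂ (LinearMap.range (Q : EuclideanSpace ℂ (Fin 2) →ₗ[ℂ]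
      EuclideanSpace ℂ (Fin 2))) = 1) :
    maxDev (P - Q) = Real.sqrt (1 -
      (LinearMap.trace ℂ (EuclideanSpace ℂ (Fin 2))
        ((P * Q : EuclideanSpace ℂ (Fin 2) →L[ℂ] EuclideanSpace ℂ (Fin 2)) :
          EuclideanSpace ℂ (Fin 2) →ₗ[ℂ] EuclideanSpace ℂ (Fin 2))).re) :=
  aux_main P Q hP hP2 hQ hQ2 hPrank hQrank
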